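/- For every integer p ≥ 2 there exists C > 0 and Z₀ such that for all z ≥ Z₀, ∫_z^∞ (s − z)^p φ(s) ds ≤ C · p! · φ(z) / z^{p+1}; moreover lim_{z→∞} ( ∫_z^∞ (s−z)^p φ(s) ds ) / ( p!·φ(z)/z^{p+1} ) = 1. -/

import Mathlib

/-!
Substituting `s = z + t` gives `φ(z + t) = φ(z) e^{-zt} e^{-t²/2}`, so the excess moment is
`φ(z) ∫₀^∞ tᵖ e^{-zt} e^{-t²/2} dt`. Sandwiching `1 - t²/2 ≤ e^{-t²/2} ≤ 1` and using the Gamma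
integral `∫₀^∞ tⁿ e^{-zt} dt = n!/z^{n+1}` pins this integral between
`p!/z^{p+1} · (1 - (p+1)(p+2)/(2z²))` and `p!/z^{p+1}`.
-/

open Real MeasureTheory Filter

noncomputable def phi (z : ℝ) : ℝ := (Real.sqrt (2 * Real.pi))⁻¹ * Real.exp (-z ^ 2 / 2)

open Set Topology
open scoped Nat

lemma phi_pos (z : ℝ) : 0 < phi z := by
  unfold phi
  positivity

lemma phi_add (t z : ℝ) : phi (t + z) = phi z * exp (-(z * t)) * exp (-(t ^ 2 / 2)) := by
  simp only [phi, mul_assoc, ← exp_add]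
  ring_nf

section LaplaceMoments

variable (n : ℕ) {z : ℝ}

lemma integrableOn_pow_mul_exp_neg_mul (hz : 0 < z) :
    IntegrableOn (fun t ↦ t ^ n * exp (-(z * t))) (Ioi 0) := by
  simpa [rpow_natCast] using
    integrableOn_rpow_mul_exp_neg_mul_rpow (p := 1) (s := n)
      (by linarith [n.cast_nonneg (α := ℝ)]) one_pos hz

lemma integral_pow_mul_exp_neg_mul (hz : 0 < z) :
    ∫ t in Ioi 0, t ^ n * exp (-(z * t)) = n ! / z ^ (n + 1) := by
  have h := integral_rpow_mul_exp_neg_mul_Ioi (a := n + 1) (by positivity) hz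
  simp_rw [add_sub_cancel_right, Gamma_nat_eq_factorial, ← Nat.cast_succ, rpow_natCast] at h
  rw [h, one_div_pow, one_div_mul_eq_div]

lemma integrableOn_pow_mul_exp_neg_mul_exp_neg_sq (hz : 0 < z) :
    IntegrableOn (fun t ↦ t ^ n * exp (-(z * t)) * exp (-(t ^ 2 / 2))) (Ioi 0) := by
  refine (integrableOn_pow_mul_exp_neg_mul n hz).mono' (by fun_prop) ?_
  filter_upwards [ae_restrict_mem measurableSet_Ioi] with t (ht : 0 < t)
  rw [norm_of_nonneg (by positivity)]
  exact mul_le_of_le_one_right (by positivity) (exp_le_one_iff.2 (by nlinarith))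

lemma integral_pow_mul_exp_neg_mul_exp_neg_sq_le (hz : 0 < z) :
    ∫ t in Ioi 0, t ^ n * exp (-(z * t)) * exp (-(t ^ 2 / 2)) ≤ n ! / z ^ (n + 1) := by
  rw [← integral_pow_mul_exp_neg_mul n hz]
  refine setIntegral_mono_on (integrableOn_pow_mul_exp_neg_mul_exp_neg_sq n hz)
    (integrableOn_pow_mul_exp_neg_mul n hz) measurableSet_Ioi fun t (ht : 0 < t) ↦ ?_
  exact mul_le_of_le_one_right (by positivity) (exp_le_one_iff.2 (by nlinarith))

lemma le_integral_pow_mul_exp_neg_mul_exp_neg_sq (hz : 0 < z) :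
    n ! / z ^ (n + 1) * (1 - (n + 1) * (n + 2) / (2 * z ^ 2)) ≤
      ∫ t in Ioi 0, t ^ n * exp (-(z * t)) * exp (-(t ^ 2 / 2)) := by
  have h_int := integrableOn_pow_mul_exp_neg_mul n hz
  have h_int₂ := (integrableOn_pow_mul_exp_neg_mul (n + 2) hz).div_const 2
  have h_eval : ∫ t in Ioi 0, (t ^ n * exp (-(z * t)) - t ^ (n + 2) * exp (-(z * t)) / 2) =
      n ! / z ^ (n + 1) * (1 - (n + 1) * (n + 2) / (2 * z ^ 2)) := by
    rw [integral_sub h_int h_int₂, integral_div, integral_pow_mul_exp_neg_mul n hz,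
      integral_pow_mul_exp_neg_mul (n + 2) hz, Nat.factorial_succ, Nat.factorial_succ]
    field_simp
    push_cast
    ring
  rw [← h_eval]
  refine setIntegral_mono_on (h_int.sub h_int₂) (integrableOn_pow_mul_exp_neg_mul_exp_neg_sq n hz)
    measurableSet_Ioi fun t (ht : 0 < t) ↦ ?_
  have h_exp : 1 - t ^ 2 / 2 ≤ exp (-(t ^ 2 / 2)) := by
    linarith [add_one_le_exp (-(t ^ 2 / 2))]
  calc t ^ n * exp (-(z * t)) - t ^ (n + 2) * exp (-(z * t)) / 2
      = t ^ n * exp (-(z * t)) * (1 - t ^ 2 / 2) := by ring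
    _ ≤ t ^ n * exp (-(z * t)) * exp (-(t ^ 2 / 2)) := by gcongr

lemma integral_Ici_sub_pow_mul_phi (z : ℝ) :
    ∫ s in Ici z, (s - z) ^ n * phi s =
      phi z * ∫ t in Ioi 0, t ^ n * exp (-(z * t)) * exp (-(t ^ 2 / 2)) := by
  have h_shift := (measurePreserving_add_right volume z).setIntegral_preimage_emb
    (measurableEmbedding_addRight z) (fun s ↦ (s - z) ^ n * phi s) (Ioi z)
  rw [show (· + z) ⁻¹' Ioi z = Ioi 0 by ext; simp] at h_shift
  rw [integral_Ici_eq_integral_Ioi, ← h_shift, ← integral_const_mul]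
  refine setIntegral_congr_fun measurableSet_Ioi fun t _ ↦ ?_
  simp only [add_sub_cancel_right, phi_add]
  ring

lemma integral_Ici_sub_pow_mul_phi_le (hz : 0 < z) :
    ∫ s in Ici z, (s - z) ^ n * phi s ≤ n ! * phi z / z ^ (n + 1) := by
  rw [integral_Ici_sub_pow_mul_phi]
  refine (mul_le_mul_of_nonneg_left (integral_pow_mul_exp_neg_mul_exp_neg_sq_le n hz)
    (phi_pos z).le).trans_eq ?_
  ring

lemma le_integral_Ici_sub_pow_mul_phi (hz : 0 < z) :
    n ! * phi z / z ^ (n + 1) * (1 - (n + 1) * (n + 2) / (2 * z ^ 2)) ≤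
      ∫ s in Ici z, (s - z) ^ n * phi s := by
  rw [integral_Ici_sub_pow_mul_phi]
  refine le_of_eq_of_le ?_ (mul_le_mul_of_nonneg_left
    (le_integral_pow_mul_exp_neg_mul_exp_neg_sq n hz) (phi_pos z).le)
  ring

end LaplaceMoments

theorem excess_moment_asymptotic_general (p : ℕ) :
    (∃ C > (0 : ℝ), ∃ Z₀ : ℝ, ∀ z ≥ Z₀,
        (∫ s in Set.Ici z, (s - z) ^ p * phi s) ≤
          C * (Nat.factorial p) * phi z / z ^ (p + 1)) ∧
    Tendsto (fun z : ℝ =>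
        (∫ s in Set.Ici z, (s - z) ^ p * phi s) /
          ((Nat.factorial p) * phi z / z ^ (p + 1)))
      atTop (nhds 1) := by
  refine ⟨⟨1, one_pos, 1, fun z hz ↦ by
    simpa using integral_Ici_sub_pow_mul_phi_le p (one_pos.trans_le hz)⟩, ?_⟩
  have h_scale_pos : ∀ z > 0, 0 < (p ! : ℝ) * phi z / z ^ (p + 1) := fun z hz ↦ by
    have := phi_pos z
    positivity
  have h_lower_lim : Tendsto (fun z : ℝ ↦ 1 - (p + 1) * (p + 2) / (2 * z ^ 2)) atTop (𝓝 1) := by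
    simpa using tendsto_const_nhds.sub <| tendsto_const_nhds.div_atTop <|
      (tendsto_pow_atTop two_ne_zero).const_mul_atTop (two_pos (α := ℝ))
  refine tendsto_of_tendsto_of_tendsto_of_le_of_le' h_lower_lim tendsto_const_nhds ?_ ?_
  · filter_upwards [eventually_gt_atTop 0] with z hz
    exact (le_div_iff₀' (h_scale_pos z hz)).2 (le_integral_Ici_sub_pow_mul_phi p hz)
  · filter_upwards [eventually_gt_atTop 0] with z hz
    exact (div_le_one (h_scale_pos z hz)).2 (integral_Ici_sub_pow_mul_phi_le p hz)

theorem excess_moment_asymptotic (p : ℕ) (hp : 2 ≤ p) :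
    (∃ C > (0 : ℝ), ∃ Z₀ : ℝ, ∀ z ≥ Z₀,
        (∫ s in Set.Ici z, (s - z) ^ p * phi s) ≤
          C * (Nat.factorial p) * phi z / z ^ (p + 1)) ∧
    Tendsto (fun z : ℝ =>
        (∫ s in Set.Ici z, (s - z) ^ p * phi s) /
          ((Nat.factorial p) * phi z / z ^ (p + 1)))
      atTop (nhds 1) :=
  excess_moment_asymptotic_general p
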